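/- With the additive disruption function φ = φ^sum and homogeneous risk (r_{i,j} = r for all i,j and some r ∈ [0,1]), the expected social welfare is the same for all 𝒬-clustered networks: Ŵ(A^𝒬) = Ŵ(A^{𝒬'}) for any two partitions 𝒬, 𝒬' of {1,…,n}. -/

import Mathlib

/-!
Replicate economy with n countries and L categories; firms = `Fin L × Fin n`
(category, country); partitions of the countries are `Setoid (Fin n)`;
`AQ B Q` is the 𝒬-clustered network A^𝒬. Each link (i,j) is disrupted
independently with probability r i j; under Hicks-neutral productivity the
expected social welfare of a network A is
Ŵ(A) = Σ_{K ⊆ M×M} [Π_{(i,j)∉K}(1 − r_{i,j}) Π_{(i,j)∈K} r_{i,j}]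
        (a_0^n ⋅ (I − A)⁻¹ u_K),
with (u_K)_i = φ_i(K,A) log(1 − ρ) + b_{ℓ(i),0} log b_{ℓ(i),0}, where
`phiSum` is the additive disruption function φ^sum.

STATEMENT 17: with φ = φ^sum and homogeneous risk (r_{i,j} = r ∈ [0,1]), the
expected social welfare is the same for all 𝒬-clustered networks.
-/

noncomputable section

open Matrix Finset

attribute [local instance] Classical.propDecidable

/-- Firms: (category, country). -/
abbrev Firm (L n : ℕ) := Fin L × Fin n

/-- Cardinality of the cluster (equivalence class) of country `c`. -/
def clusterCard {n : ℕ} (Q : Setoid (Fin n)) (c : Fin n) : ℕ :=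
  (univ.filter fun c' => Q.r c c').card

/-- The 𝒬-clustered production network A^𝒬. -/
def AQ {L n : ℕ} (B : Fin L → Fin L → ℝ) (Q : Setoid (Fin n)) :
    Matrix (Firm L n) (Firm L n) ℝ :=
  Matrix.of fun i j =>
    if i.1 = j.1 then (if i = j then B i.1 i.1 else 0)
    else if Q.r i.2 j.2 then B i.1 j.1 / (clusterCard Q i.2 : ℝ) else 0

/-- Household consumption shares on firms: a0 ℓ / n. -/
def a0n {L : ℕ} (n : ℕ) (a0 : Fin L → ℝ) : Firm L n → ℝ :=
  fun i => a0 i.1 / n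

/-- Min-disruption function φ^min: for each category, the smallest disrupted
positive input share (0 if no such link). -/
def phiMin {L n : ℕ} (A : Matrix (Firm L n) (Firm L n) ℝ)
    (K : Finset (Firm L n × Firm L n)) (i : Firm L n) : ℝ :=
  ∑ ℓ : Fin L,
    (if h : (univ.filter fun j : Firm L n =>
        j.1 = ℓ ∧ (i, j) ∈ K ∧ 0 < A i j).Nonempty
     then (univ.filter fun j : Firm L n =>
        j.1 = ℓ ∧ (i, j) ∈ K ∧ 0 < A i j).inf' h (fun j => A i j)
     else 0)

/-- Additive disruption function φ^sum. -/
def phiSum {L n : ℕ} (A : Matrix (Firm L n) (Firm L n) ℝ)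
    (K : Finset (Firm L n × Firm L n)) (i : Firm L n) : ℝ :=
  ∑ j ∈ univ.filter (fun j : Firm L n => (i, j) ∈ K ∧ 0 < A i j), A i j

/-- Disrupted entropy-corrected productivity vector u_K. -/
def uK {L n : ℕ} (b0 : Fin L → ℝ) (ρ : ℝ)
    (φ : Matrix (Firm L n) (Firm L n) ℝ → Finset (Firm L n × Firm L n) → Firm L n → ℝ)
    (A : Matrix (Firm L n) (Firm L n) ℝ) (K : Finset (Firm L n × Firm L n)) :
    Firm L n → ℝ :=
  fun i => φ A K i * Real.log (1 - ρ) + b0 i.1 * Real.log (b0 i.1)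

/-- Expected social welfare Ŵ(A). -/
def What {L n : ℕ} (a0 b0 : Fin L → ℝ) (ρ : ℝ) (r : Firm L n → Firm L n → ℝ)
    (φ : Matrix (Firm L n) (Firm L n) ℝ → Finset (Firm L n × Firm L n) → Firm L n → ℝ)
    (A : Matrix (Firm L n) (Firm L n) ℝ) : ℝ :=
  ∑ K : Finset (Firm L n × Firm L n),
    ((∏ p ∈ Kᶜ, (1 - r p.1 p.2)) * ∏ p ∈ K, r p.1 p.2) *
      (a0n n a0 ⬝ᵥ ((1 - A)⁻¹.mulVec (uK b0 ρ φ A K)))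

/-!
Welfare is linear in `u_K`, so `Ŵ(A) = a₀ⁿ ⬝ (I - A)⁻¹ E[u_K]`, and for `φ^sum` the expected
disruption of firm `i` is `∑_j r_{ij} A_{ij}` over its positive inputs. In a `𝒬`-clustered
network a firm of category `ℓ` spends exactly `b_{ℓ,ℓ'}` on category `ℓ'`, however its cluster
splits that spending. So under homogeneous risk `E[u_K]` only depends on the category, and
`A^𝒬` acts on category-constant vectors as `B` acts on `ℝ^L`. Hence `(I - A^𝒬)⁻¹ E[u_K]` is the
lift of `(I - B)⁻¹ v` for a vector `v` on categories that does not involve `𝒬`.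
-/

section BernoulliWeight

variable {α : Type*} [Fintype α] [DecidableEq α]

/-- Probability that exactly the links in `K` are disrupted, link `p` independently with
probability `r p`. -/
def bernoulliWeight (r : α → ℝ) (K : Finset α) : ℝ :=
  (∏ p ∈ Kᶜ, (1 - r p)) * ∏ p ∈ K, r p

theorem sum_bernoulliWeight (r : α → ℝ) : ∑ K, bernoulliWeight r K = 1 := by
  simpa [bernoulliWeight, mul_comm] using (Fintype.prod_add r fun p => 1 - r p).symm

theorem sum_bernoulliWeight_of_mem (r : α → ℝ) (p : α) :
    ∑ K, (if p ∈ K then bernoulliWeight r K else 0) = r p := by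
  -- replacing the factor `1 - r p` by `0` kills exactly the sets `K ∌ p`
  set g : α → ℝ := fun q => if q = p then 0 else 1 - r q
  calc ∑ K, (if p ∈ K then bernoulliWeight r K else 0)
      = ∑ K, (∏ q ∈ K, r q) * ∏ q ∈ Kᶜ, g q := by
        refine Finset.sum_congr rfl fun K _ => ?_
        by_cases hp : p ∈ K
        · rw [if_pos hp, bernoulliWeight, mul_comm]
          congr 1
          exact Finset.prod_congr rfl fun q hq => (if_neg (by rintro rfl; simp_all)).symm
        · rw [if_neg hp, eq_comm]
          exact mul_eq_zero_of_right _ (Finset.prod_eq_zero (Finset.mem_compl.mpr hp) (if_pos rfl))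
    _ = ∏ q, (r q + g q) := (Fintype.prod_add r g).symm
    _ = ∏ q, if q = p then r p else 1 := by
        refine Finset.prod_congr rfl fun q _ => ?_
        by_cases hq : q = p <;> simp [g, hq]
    _ = r p := by simp

end BernoulliWeight

section Lumping

variable {α γ : Type*} [Fintype α] [Fintype γ]

theorem Matrix.mulVec_comp_fst {R : Type*} [NonUnitalNonAssocSemiring R]
    (A : Matrix (α × γ) (α × γ) R) (B : Matrix α α R)
    (hA : ∀ i a, ∑ c, A i (a, c) = B i.1 a) (v : α → R) :
    A *ᵥ (fun j => v j.1) = fun i => (B *ᵥ v) i.1 := by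
  ext i
  simp only [mulVec, dotProduct, Fintype.sum_prod_type, ← Finset.sum_mul, hA]

theorem Matrix.inv_one_sub_mulVec_comp_fst {R : Type*} [CommRing R] [DecidableEq α]
    [DecidableEq (α × γ)] (A : Matrix (α × γ) (α × γ) R) (B : Matrix α α R)
    (hA : ∀ i a, ∑ c, A i (a, c) = B i.1 a) (hAu : IsUnit (1 - A)) (hBu : IsUnit (1 - B))
    (v : α → R) :
    (1 - A)⁻¹ *ᵥ (fun j => v j.1) = fun i => ((1 - B)⁻¹ *ᵥ v) i.1 := by
  have := hAu.invertible
  have := hBu.invertible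
  refine inv_mulVec_eq_vec ?_
  rw [sub_mulVec, one_mulVec, mulVec_comp_fst A B hA]
  have hw : (1 - B) *ᵥ ((1 - B)⁻¹ *ᵥ v) = v := by
    rw [mulVec_mulVec, mul_inv_of_invertible, one_mulVec]
  rw [sub_mulVec, one_mulVec] at hw
  ext j
  exact (congrFun hw j.1).symm

end Lumping

section LinftyOpNorm

attribute [local instance] Matrix.linftyOpNormedRing Matrix.linftyOpNormedAlgebra

theorem Matrix.isUnit_one_sub_of_sum_abs_lt {ι : Type*} [Fintype ι] [DecidableEq ι]
    (A : Matrix ι ι ℝ) (h : ∀ i, ∑ j, |A i j| < 1) : IsUnit (1 - A) := by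
  have hA : ‖A‖ < 1 := by
    rw [Matrix.linfty_opNorm_def]
    exact_mod_cast (Finset.sup_lt_iff zero_lt_one).mpr fun i _ => by
      simpa [← NNReal.coe_lt_coe] using h i
  exact (Units.oneSub A hA).isUnit

end LinftyOpNorm

section Clustered

variable {L n : ℕ}

theorem clusterCard_pos (Q : Setoid (Fin n)) (c : Fin n) : 0 < clusterCard Q c :=
  Finset.card_pos.mpr ⟨c, Finset.mem_filter.mpr ⟨Finset.mem_univ c, Q.refl c⟩⟩

theorem AQ_nonneg {B : Fin L → Fin L → ℝ} (hB : ∀ ℓ ℓ', 0 ≤ B ℓ ℓ') (Q : Setoid (Fin n))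
    (i j : Firm L n) : 0 ≤ AQ B Q i j := by
  rw [AQ, of_apply]
  split_ifs <;> first | exact hB _ _ | exact le_rfl | exact div_nonneg (hB _ _) (Nat.cast_nonneg _)

theorem sum_AQ_fiber (B : Fin L → Fin L → ℝ) (Q : Setoid (Fin n)) (i : Firm L n) (ℓ : Fin L) :
    ∑ c, AQ B Q i (ℓ, c) = B i.1 ℓ := by
  obtain ⟨k, d⟩ := i
  by_cases h : k = ℓ
  · subst h
    simp [AQ, Prod.ext_iff]
  · have hcard : (clusterCard Q d : ℝ) ≠ 0 := Nat.cast_ne_zero.mpr (clusterCard_pos Q d).ne'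
    simp only [AQ, of_apply, h, if_false]
    rw [← Finset.sum_filter, Finset.sum_const, nsmul_eq_mul]
    exact mul_div_cancel₀ _ hcard

theorem sum_AQ_row (B : Fin L → Fin L → ℝ) (Q : Setoid (Fin n)) (i : Firm L n) :
    ∑ j, AQ B Q i j = ∑ ℓ, B i.1 ℓ := by
  rw [Fintype.sum_prod_type]
  exact Finset.sum_congr rfl fun ℓ _ => sum_AQ_fiber B Q i ℓ

end Clustered

section Welfare

variable {L n : ℕ}

theorem What_eq_dotProduct_expected_uK (a0 b0 : Fin L → ℝ) (ρ : ℝ) (r : Firm L n → Firm L n → ℝ)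
    (φ : Matrix (Firm L n) (Firm L n) ℝ → Finset (Firm L n × Firm L n) → Firm L n → ℝ)
    (A : Matrix (Firm L n) (Firm L n) ℝ) :
    What a0 b0 ρ r φ A = a0n n a0 ⬝ᵥ ((1 - A)⁻¹ *ᵥ
      ∑ K, bernoulliWeight (fun p => r p.1 p.2) K • uK b0 ρ φ A K) := by
  simp only [What, mulVec_sum, dotProduct_sum, mulVec_smul, dotProduct_smul, smul_eq_mul]
  rfl

theorem sum_bernoulliWeight_mul_uK (b0 : Fin L → ℝ) (ρ : ℝ) (w : Firm L n × Firm L n → ℝ)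
    (φ : Matrix (Firm L n) (Firm L n) ℝ → Finset (Firm L n × Firm L n) → Firm L n → ℝ)
    (A : Matrix (Firm L n) (Firm L n) ℝ) (i : Firm L n) :
    ∑ K, bernoulliWeight w K * uK b0 ρ φ A K i
      = (∑ K, bernoulliWeight w K * φ A K i) * Real.log (1 - ρ)
        + b0 i.1 * Real.log (b0 i.1) := by
  simp only [uK, mul_add, Finset.sum_add_distrib, ← Finset.sum_mul, ← mul_assoc,
    sum_bernoulliWeight, one_mul]

theorem sum_bernoulliWeight_mul_phiSum (r : Firm L n → Firm L n → ℝ)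
    (A : Matrix (Firm L n) (Firm L n) ℝ) (i : Firm L n) :
    ∑ K, bernoulliWeight (fun p => r p.1 p.2) K * phiSum A K i
      = ∑ j ∈ univ.filter (fun j => 0 < A i j), r i j * A i j := by
  have hphi : ∀ K, phiSum A K i
      = ∑ j ∈ univ.filter (fun j => 0 < A i j), if (i, j) ∈ K then A i j else 0 := by
    intro K
    rw [phiSum, ← Finset.sum_filter, Finset.filter_filter]
    simp only [and_comm]
  simp only [hphi, Finset.mul_sum]
  rw [Finset.sum_comm]
  refine Finset.sum_congr rfl fun j _ => ?_
  rw [← sum_bernoulliWeight_of_mem (fun p => r p.1 p.2) (i, j), Finset.sum_mul]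
  exact Finset.sum_congr rfl fun K _ => by split_ifs <;> simp

end Welfare

/-- The expectation of `uK b0 ρ phiSum (AQ B Q) K` at every firm of category `ℓ` when each link
is disrupted with probability `r0`. -/
def meanUK {L : ℕ} (b0 : Fin L → ℝ) (B : Fin L → Fin L → ℝ) (ρ r0 : ℝ) (ℓ : Fin L) : ℝ :=
  r0 * (∑ ℓ', B ℓ ℓ') * Real.log (1 - ρ) + b0 ℓ * Real.log (b0 ℓ)

theorem What_AQ_homogeneous {L n : ℕ} (a0 : Fin L → ℝ) {b0 : Fin L → ℝ} {B : Fin L → Fin L → ℝ}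
    (hb0 : ∀ ℓ, 0 < b0 ℓ) (hB : ∀ ℓ ℓ', 0 ≤ B ℓ ℓ') (hrow : ∀ ℓ, b0 ℓ + ∑ ℓ', B ℓ ℓ' ≤ 1)
    (ρ r0 : ℝ) (Q : Setoid (Fin n)) :
    What a0 b0 ρ (fun _ _ => r0) phiSum (AQ B Q)
      = a0n n a0 ⬝ᵥ fun i => ((1 - of B)⁻¹ *ᵥ meanUK b0 B ρ r0) i.1 := by
  have hrow_lt (ℓ : Fin L) : ∑ ℓ', B ℓ ℓ' < 1 := by linarith [hrow ℓ, hb0 ℓ]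
  have hmean : ∑ K, bernoulliWeight (fun _ => r0) K • uK b0 ρ phiSum (AQ B Q) K
      = fun i => meanUK b0 B ρ r0 i.1 := by
    ext i
    simp only [Finset.sum_apply, Pi.smul_apply, smul_eq_mul]
    rw [sum_bernoulliWeight_mul_uK, sum_bernoulliWeight_mul_phiSum (fun _ _ => r0),
      ← Finset.mul_sum, Finset.sum_filter_of_ne fun j _ h => (AQ_nonneg hB Q i j).lt_of_ne' h,
      sum_AQ_row, meanUK]
  rw [What_eq_dotProduct_expected_uK, hmean]
  congr 1
  refine inv_one_sub_mulVec_comp_fst _ (of B) (sum_AQ_fiber B Q) ?_ ?_ _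
  · refine isUnit_one_sub_of_sum_abs_lt _ fun i => ?_
    simpa only [abs_of_nonneg (AQ_nonneg hB Q i _), sum_AQ_row] using hrow_lt i.1
  · refine isUnit_one_sub_of_sum_abs_lt _ fun ℓ => ?_
    simpa only [of_apply, abs_of_nonneg (hB ℓ _)] using hrow_lt ℓ

theorem sum_disruption_homogeneous_welfare_invariance_general
    (n L : ℕ)
    (a0 b0 : Fin L → ℝ) (B : Fin L → Fin L → ℝ)
    (hb0 : ∀ ℓ, 0 < b0 ℓ) (hB : ∀ ℓ ℓ', 0 ≤ B ℓ ℓ')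
    (hrow : ∀ ℓ, b0 ℓ + ∑ ℓ', B ℓ ℓ' ≤ 1)
    (ρ : ℝ)
    (r : Firm L n → Firm L n → ℝ)
    (hr : ∃ r0 ∈ Set.Icc (0 : ℝ) 1, ∀ i j : Firm L n, r i j = r0)
    (Q Q' : Setoid (Fin n)) :
    What a0 b0 ρ r phiSum (AQ B Q) = What a0 b0 ρ r phiSum (AQ B Q') := by
  obtain ⟨r0, -, hr⟩ := hr
  obtain rfl : r = fun _ _ => r0 := funext₂ hr
  rw [What_AQ_homogeneous a0 hb0 hB hrow ρ r0 Q, What_AQ_homogeneous a0 hb0 hB hrow ρ r0 Q']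

theorem sum_disruption_homogeneous_welfare_invariance
    (n L : ℕ) (hn : 1 ≤ n) (hL : 1 ≤ L)
    (a0 b0 : Fin L → ℝ) (B : Fin L → Fin L → ℝ)
    (ha0 : ∀ ℓ, 0 < a0 ℓ) (ha0sum : ∑ ℓ, a0 ℓ = 1)
    (hb0 : ∀ ℓ, 0 < b0 ℓ) (hB : ∀ ℓ ℓ', 0 ≤ B ℓ ℓ')
    (hrow : ∀ ℓ, b0 ℓ + ∑ ℓ', B ℓ ℓ' ≤ 1)
    (ρ : ℝ) (hρ : ρ ∈ Set.Ico (0 : ℝ) 1)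
    (r : Firm L n → Firm L n → ℝ)
    (hr : ∃ r0 ∈ Set.Icc (0 : ℝ) 1, ∀ i j : Firm L n, r i j = r0)
    (Q Q' : Setoid (Fin n)) :
    What a0 b0 ρ r phiSum (AQ B Q) = What a0 b0 ρ r phiSum (AQ B Q') :=
  sum_disruption_homogeneous_welfare_invariance_general n L a0 b0 B hb0 hB hrow ρ r hr Q Q'

end
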